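/- arXiv:2411.04010 — 3 statements merged into one kernel-verified Lean document; each statement's English description precedes it below -/
import Mathlib

section
/- Let A = L + iH with L, H Hermitian N×N matrices and set U(k,t) = e^{−it(kL + H)}. Let f : ℝ → ℂ be continuously differentiable with f, f′ bounded, and let g : (0,∞) → ℂ be continuously differentiable with g, g′, and t ↦ t·g(t) bounded. Fix K, T > 0 and positive integers M_k, M_t; set h_k = 2K/M_k, h_t = T/M_t, k_j = −K + j h_k, t_l = l h_t, c_j = h_k f(k_j)/(1 − i k_j), and ĉ_l = h_t g(t_l). Then ‖ ∫_0^T ∫_{−K}^K (f(k)g(t)/(1 − ik)) U(k,t) dk dt − Σ_{j=0}^{M_k−1} Σ_{l=0}^{M_t−1} c_j ĉ_l U(k_j, t_l) ‖ ≤ 2KT h_k ( ‖f‖_∞ ‖t g(t)‖_∞ ‖A‖ + (‖f′‖_∞ + ‖f‖_∞) ‖g‖_∞ ) + 2KT h_t ( 2 ‖f‖_∞ ‖g‖_∞ ‖A‖ + ‖f‖_∞ ‖g′‖_∞ ), where ‖f‖_∞ denotes the supremum norm over ℝ, the sup norms of g, g′, t g(t) are over (0,∞), and ‖A‖ is the operator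 norm. -/
/-!
Write `P(k,t) = (f(k) g(t) / (1 - ik)) U(k,t)`. A left-endpoint Riemann sum with step `h` of a
function that is `C`-Lipschitz on an interval of length `ℓ` is off by at most `C ℓ h`. Applied in
`t` to `G(t) = ∫ P(k,t) dk` and in `k` at every grid time, this reduces the claim to Lipschitz
bounds for `P` in each variable. Those come from `‖U‖ ≤ 1` and `‖e^X - e^Y‖ ≤ ‖X - Y‖` for
skew-adjoint `X, Y`, which give `‖U(k,t) - U(k',t)‖ ≤ |t| ‖L‖ |k - k'|` and
`‖U(k,t) - U(k,t')‖ ≤ (|k| ‖L‖ + ‖H‖) |t - t'|`. The weight `1/(1 - ik)` absorbs the growth in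
`|k|`, the bound on `t g(t)` absorbs the growth in `t`, and `‖L‖, ‖H‖ ≤ ‖A‖` since `L, H` are the
real and imaginary parts of `A`.
-/

open MeasureTheory Matrix Set Finset
open scoped Matrix.Norms.L2Operator

section RiemannSum

variable {E : Type*} [NormedAddCommGroup E]

theorem continuousOn_of_norm_sub_le {F : ℝ → E} {s : Set ℝ} {C : ℝ}
    (hF : ∀ x ∈ s, ∀ y ∈ s, ‖F x - F y‖ ≤ C * |x - y|) : ContinuousOn F s :=
  (LipschitzOnWith.of_dist_le' (by simpa only [dist_eq_norm, Real.norm_eq_abs] using hF))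
    |>.continuousOn

theorem add_mul_mem_Icc_of_mul_eq {a b h : ℝ} {n j : ℕ} (hh : 0 ≤ h) (hnh : n * h = b - a)
    (hj : j ≤ n) : a + j * h ∈ Icc a b := by
  have : (j : ℝ) * h ≤ n * h := by gcongr
  constructor <;> nlinarith [(j.cast_nonneg : (0 : ℝ) ≤ j)]

variable [NormedSpace ℝ E] [CompleteSpace E]

theorem norm_integral_sub_smul_left_le {F : ℝ → E} {a b C : ℝ} (hab : a ≤ b)
    (hF : ∀ x ∈ Icc a b, ∀ y ∈ Icc a b, ‖F x - F y‖ ≤ C * |x - y|) :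
    ‖(∫ x in a..b, F x) - (b - a) • F a‖ ≤ C * (b - a) * (b - a) := by
  have hint : IntervalIntegrable F volume a b :=
    (continuousOn_of_norm_sub_le hF).intervalIntegrable_of_Icc hab
  rw [← intervalIntegral.integral_const,
    ← intervalIntegral.integral_sub hint intervalIntegrable_const,
    ← abs_of_nonneg (sub_nonneg.2 hab)]
  refine intervalIntegral.norm_integral_le_of_norm_le_const fun x hx => ?_
  rw [uIoc_of_le hab] at hx
  have hxa := hF x (Ioc_subset_Icc_self hx) a (left_mem_Icc.2 hab)
  rw [abs_of_pos (sub_pos.2 hx.1)] at hxa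
  have hC : 0 ≤ C := nonneg_of_mul_nonneg_left ((norm_nonneg _).trans hxa) (sub_pos.2 hx.1)
  refine hxa.trans (mul_le_mul_of_nonneg_left ?_ hC)
  rw [abs_of_nonneg (sub_nonneg.2 hab)]
  linarith [hx.2]

theorem norm_integral_sub_riemannSum_le {F : ℝ → E} {a b C h : ℝ} {n : ℕ} (hh : 0 ≤ h)
    (hnh : n * h = b - a) (hF : ∀ x ∈ Icc a b, ∀ y ∈ Icc a b, ‖F x - F y‖ ≤ C * |x - y|) :
    ‖(∫ x in a..b, F x) - ∑ j ∈ range n, h • F (a + j * h)‖ ≤ C * (b - a) * h := by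
  set x : ℕ → ℝ := fun j => a + j * h
  have hcell : ∀ j < n, Icc (x j) (x (j + 1)) ⊆ Icc a b := fun j hj =>
    Icc_subset_Icc (add_mul_mem_Icc_of_mul_eq hh hnh hj.le).1
      (add_mul_mem_Icc_of_mul_eq hh hnh hj).2
  have hstep : ∀ j, x (j + 1) - x j = h := fun j => by simp only [x]; push_cast; ring
  have hsplit : ∫ y in a..b, F y = ∑ j ∈ range n, ∫ y in x j..x (j + 1), F y := by
    rw [intervalIntegral.sum_integral_adjacent_intervals fun j hj =>
      ((continuousOn_of_norm_sub_le hF).mono (hcell j hj)).intervalIntegrable_of_Icc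
        (by linarith [hstep j])]
    simp only [x, CharP.cast_eq_zero, zero_mul, add_zero, hnh, add_sub_cancel]
  rw [hsplit, ← sum_sub_distrib]
  calc ‖∑ j ∈ range n, ((∫ y in x j..x (j + 1), F y) - h • F (x j))‖
      ≤ ∑ _j ∈ range n, C * h * h := norm_sum_le_of_le _ fun j hj => by
        have := norm_integral_sub_smul_left_le (by linarith [hstep j]) fun y hy z hz =>
          hF y (hcell j (mem_range.1 hj) hy) z (hcell j (mem_range.1 hj) hz)
        rwa [hstep] at this
    _ = C * (b - a) * h := by rw [sum_const, card_range, nsmul_eq_mul, ← hnh]; ring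

theorem norm_integral_integral_sub_riemannSum_le {P : ℝ → ℝ → E} {a b c d Cx Ct hx ht : ℝ}
    {m n : ℕ} (hhx : 0 ≤ hx) (hmx : m * hx = b - a) (hht : 0 ≤ ht) (hnt : n * ht = d - c)
    (hPx : ∀ t ∈ Icc c d, ∀ x ∈ Icc a b, ∀ y ∈ Icc a b, ‖P x t - P y t‖ ≤ Cx * |x - y|)
    (hPt : ∀ x ∈ Icc a b, ∀ t ∈ Icc c d, ∀ s ∈ Icc c d, ‖P x t - P x s‖ ≤ Ct * |t - s|) :
    ‖(∫ t in c..d, ∫ x in a..b, P x t)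
        - ∑ j ∈ range m, ∑ l ∈ range n, (hx * ht) • P (a + j * hx) (c + l * ht)‖
      ≤ Cx * (b - a) * (d - c) * hx + Ct * (b - a) * (d - c) * ht := by
  have hab : a ≤ b := by nlinarith [(m.cast_nonneg : (0 : ℝ) ≤ m)]
  set G : ℝ → E := fun t => ∫ x in a..b, P x t
  set R : ℝ → E := fun t => ∑ j ∈ range m, hx • P (a + j * hx) t
  have hint : ∀ t ∈ Icc c d, IntervalIntegrable (P · t) volume a b := fun t ht =>
    (continuousOn_of_norm_sub_le (hPx t ht)).intervalIntegrable_of_Icc hab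
  have hG : ∀ t ∈ Icc c d, ∀ s ∈ Icc c d, ‖G t - G s‖ ≤ (Ct * (b - a)) * |t - s| := by
    intro t ht s hs
    rw [← intervalIntegral.integral_sub (hint t ht) (hint s hs), ← abs_of_nonneg (sub_nonneg.2 hab),
      mul_right_comm]
    exact intervalIntegral.norm_integral_le_of_norm_le_const fun x hx =>
      hPt x (uIoc_subset_uIcc.trans (uIcc_of_le hab).subset hx) t ht s hs
  have hGR : ∀ l < n, ‖G (c + l * ht) - R (c + l * ht)‖ ≤ Cx * (b - a) * hx := fun l hl =>
    norm_integral_sub_riemannSum_le hhx hmx (hPx _ (add_mul_mem_Icc_of_mul_eq hht hnt hl.le))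
  have hsum : ∑ j ∈ range m, ∑ l ∈ range n, (hx * ht) • P (a + j * hx) (c + l * ht)
      = ∑ l ∈ range n, ht • R (c + l * ht) := by
    simp only [R, smul_sum, smul_smul, mul_comm ht hx]
    exact sum_comm
  have hdecomp : (∫ t in c..d, G t) - ∑ l ∈ range n, ht • R (c + l * ht)
      = ((∫ t in c..d, G t) - ∑ l ∈ range n, ht • G (c + l * ht))
        + ∑ l ∈ range n, ht • (G (c + l * ht) - R (c + l * ht)) := by
    simp only [smul_sub, sum_sub_distrib]; abel
  rw [hsum, hdecomp]
  have hout := norm_integral_sub_riemannSum_le hht hnt hG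
  have hin : ‖∑ l ∈ range n, ht • (G (c + l * ht) - R (c + l * ht))‖
      ≤ ∑ _l ∈ range n, ht * (Cx * (b - a) * hx) := norm_sum_le_of_le _ fun l hl => by
    rw [norm_smul, Real.norm_of_nonneg hht]
    exact mul_le_mul_of_nonneg_left (hGR l (mem_range.1 hl)) hht
  rw [sum_const, card_range, nsmul_eq_mul, ← mul_assoc, hnt] at hin
  linarith [norm_add_le ((∫ t in c..d, G t) - ∑ l ∈ range n, ht • G (c + l * ht))
    (∑ l ∈ range n, ht • (G (c + l * ht) - R (c + l * ht)))]

end RiemannSum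

theorem norm_le_of_continuousOn_Ici {E : Type*} [SeminormedAddCommGroup E] {φ : ℝ → E}
    {a C : ℝ} (hφ : ContinuousOn φ (Ici a)) (h : ∀ t ∈ Ioi a, ‖φ t‖ ≤ C) {t : ℝ} (ht : a ≤ t) :
    ‖φ t‖ ≤ C := by
  rw [← closure_Ioi] at hφ
  have hsub : closure (φ '' Ioi a) ⊆ Metric.closedBall 0 C :=
    Metric.isClosed_closedBall.closure_subset_iff.2
      (image_subset_iff.2 fun t ht => mem_closedBall_zero_iff.2 (h t ht))
  exact mem_closedBall_zero_iff.1 (hsub (hφ.image_closure ⟨t, by rwa [closure_Ioi], rfl⟩))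

theorem norm_sub_le_of_contDiffOn_Ici {E : Type*} [NormedAddCommGroup E] [NormedSpace ℝ E]
    {g : ℝ → E} {a C : ℝ} (hg : ContDiffOn ℝ 1 g (Ici a)) (hC : ∀ t ∈ Ioi a, ‖deriv g t‖ ≤ C)
    {t s : ℝ} (ht : t ∈ Ici a) (hs : s ∈ Ici a) : ‖g t - g s‖ ≤ C * |t - s| := by
  have hderiv : ∀ t ∈ Ici a, ‖derivWithin g (Ici a) t‖ ≤ C := fun t ht =>
    norm_le_of_continuousOn_Ici (hg.continuousOn_derivWithin (uniqueDiffOn_Ici a) le_rfl)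
      (fun t ht => by rw [derivWithin_of_mem_nhds (Ici_mem_nhds ht)]; exact hC t ht) ht
  simpa only [Real.norm_eq_abs] using Convex.norm_image_sub_le_of_norm_derivWithin_le
    (hg.differentiableOn one_ne_zero) hderiv (convex_Ici a) hs ht

theorem norm_smul_sub_smul_le {𝕜 E : Type*} [NormedField 𝕜] [SeminormedAddCommGroup E]
    [NormedSpace 𝕜 E] (a a' : 𝕜) (u u' : E) :
    ‖a • u - a' • u'‖ ≤ ‖a - a'‖ * ‖u‖ + ‖a'‖ * ‖u - u'‖ := by
  rw [show a • u - a' • u' = (a - a') • u + a' • (u - u') by rw [sub_smul, smul_sub]; abel,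
    ← norm_smul, ← norm_smul]
  exact norm_add_le _ _

section HermitianParts

open Complex ComplexStarModule

variable {A : Type*} [SeminormedAddCommGroup A] [StarAddMonoid A] [NormedSpace ℂ A]
  [StarModule ℂ A] [NormedStarGroup A] {L H : A}

theorem IsSelfAdjoint.norm_le_norm_add_I_smul_left (hL : IsSelfAdjoint L) (hH : IsSelfAdjoint H) :
    ‖L‖ ≤ ‖L + I • H‖ := by
  have hre : (ℜ (L + I • H) : A) = L := by
    simp [hL.coe_realPart, hH.imaginaryPart]
  calc ‖L‖ = ‖(ℜ (L + I • H) : A)‖ := by rw [hre]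
    _ ≤ ‖L + I • H‖ := realPart.norm_le _

theorem IsSelfAdjoint.norm_le_norm_add_I_smul_right (hL : IsSelfAdjoint L)
    (hH : IsSelfAdjoint H) : ‖H‖ ≤ ‖L + I • H‖ := by
  have him : (ℑ (L + I • H) : A) = H := by
    simp [hL.imaginaryPart, hH.coe_realPart]
  calc ‖H‖ = ‖(ℑ (L + I • H) : A)‖ := by rw [him]
    _ ≤ ‖L + I • H‖ := imaginaryPart.norm_le _

end HermitianParts

section Propagator

open NormedSpace Complex

variable {𝒜 : Type*} [CStarAlgebra 𝒜]

theorem norm_exp_le_one_of_mem_skewAdjoint {X : 𝒜} (hX : X ∈ skewAdjoint 𝒜) : ‖exp X‖ ≤ 1 := by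
  nontriviality 𝒜
  let : NormedAlgebra ℚ 𝒜 := .restrictScalars ℚ ℂ 𝒜
  exact (CStarRing.norm_of_mem_unitary (exp_mem_unitary_of_mem_skewAdjoint hX)).le

/-- Duhamel: `exp X - exp Y = ∫₀¹ exp (sX) (X - Y) exp ((1 - s)Y) ds`, and the outer factors are
unitary. -/
theorem norm_exp_sub_exp_le_of_mem_skewAdjoint {X Y : 𝒜} (hX : X ∈ skewAdjoint 𝒜)
    (hY : Y ∈ skewAdjoint 𝒜) : ‖exp X - exp Y‖ ≤ ‖X - Y‖ := by
  have hψ : ∀ s : ℝ, HasDerivAt (fun s : ℝ => exp (s • X) * exp ((1 - s) • Y))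
      (exp (s • X) * ((X - Y) * exp ((1 - s) • Y))) s := by
    intro s
    have hY' : HasDerivAt (fun s : ℝ => exp ((1 - s) • Y)) ((-1 : ℝ) • (exp ((1 - s) • Y) * Y)) s :=
      (hasDerivAt_exp_smul_const Y (1 - s)).scomp s ((hasDerivAt_id s).const_sub 1)
    refine ((hasDerivAt_exp_smul_const X s).mul hY').congr_deriv ?_
    rw [← (((Commute.refl Y).smul_right (1 - s)).exp_right).eq]
    simp only [neg_one_smul, mul_neg, sub_mul, mul_sub, mul_assoc]
    abel
  have hbound : ∀ s : ℝ, ‖exp (s • X) * ((X - Y) * exp ((1 - s) • Y))‖ ≤ ‖X - Y‖ := fun s =>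
    calc _ ≤ ‖exp (s • X)‖ * (‖X - Y‖ * ‖exp ((1 - s) • Y)‖) :=
          (norm_mul_le _ _).trans (by gcongr; exact norm_mul_le _ _)
      _ ≤ 1 * (‖X - Y‖ * 1) := by
          gcongr
          · exact norm_exp_le_one_of_mem_skewAdjoint (skewAdjoint.smul_mem s hX)
          · exact norm_exp_le_one_of_mem_skewAdjoint (skewAdjoint.smul_mem (1 - s) hY)
      _ = ‖X - Y‖ := by ring
  simpa using Convex.norm_image_sub_le_of_norm_hasDerivWithin_le
    (fun s _ => (hψ s).hasDerivWithinAt) (fun s _ => hbound s) convex_univ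
    (mem_univ 0) (mem_univ 1)

noncomputable def propagator (L H : 𝒜) (k t : ℝ) : 𝒜 :=
  exp ((-(I * t)) • ((k : ℂ) • L + H))

variable {L H : 𝒜}

theorem propagator_generator_mem_skewAdjoint (hL : IsSelfAdjoint L) (hH : IsSelfAdjoint H)
    (k t : ℝ) : (-(I * t)) • ((k : ℂ) • L + H) ∈ skewAdjoint 𝒜 := by
  refine IsSelfAdjoint.smul_mem_skewAdjoint ?_ ((IsSelfAdjoint.smul (conj_ofReal k) hL).add hH)
  simp [skewAdjoint.mem_iff]

theorem norm_propagator_le_one (hL : IsSelfAdjoint L) (hH : IsSelfAdjoint H) (k t : ℝ) :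
    ‖propagator L H k t‖ ≤ 1 :=
  norm_exp_le_one_of_mem_skewAdjoint (propagator_generator_mem_skewAdjoint hL hH k t)

theorem norm_propagator_sub_propagator_left_le (hL : IsSelfAdjoint L) (hH : IsSelfAdjoint H)
    (k k' t : ℝ) : ‖propagator L H k t - propagator L H k' t‖ ≤ |t| * ‖L‖ * |k - k'| := by
  refine (norm_exp_sub_exp_le_of_mem_skewAdjoint (propagator_generator_mem_skewAdjoint hL hH k t)
    (propagator_generator_mem_skewAdjoint hL hH k' t)).trans (le_of_eq ?_)
  rw [← smul_sub, add_sub_add_right_eq_sub, ← sub_smul, norm_smul, norm_smul, ← ofReal_sub]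
  simp only [norm_neg, norm_mul, norm_I, norm_real, Real.norm_eq_abs]
  ring

theorem norm_propagator_sub_propagator_right_le (hL : IsSelfAdjoint L) (hH : IsSelfAdjoint H)
    (k t t' : ℝ) :
    ‖propagator L H k t - propagator L H k t'‖ ≤ (|k| * ‖L‖ + ‖H‖) * |t - t'| := by
  refine (norm_exp_sub_exp_le_of_mem_skewAdjoint (propagator_generator_mem_skewAdjoint hL hH k t)
    (propagator_generator_mem_skewAdjoint hL hH k t')).trans ?_
  have hscalar : ‖-(I * t) - -(I * t')‖ = |t - t'| := by
    rw [neg_sub_neg, ← mul_sub, ← ofReal_sub, norm_mul, norm_I, one_mul, norm_real,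
      Real.norm_eq_abs, abs_sub_comm]
  rw [← sub_smul, norm_smul, hscalar, mul_comm]
  gcongr
  refine (norm_add_le _ _).trans_eq ?_
  rw [norm_smul, norm_real, Real.norm_eq_abs]

end Propagator

section Weight

open Complex

theorem one_le_norm_one_sub_I_mul (k : ℝ) : 1 ≤ ‖1 - I * k‖ := by
  simpa using abs_re_le_norm (1 - I * k)

theorem abs_le_norm_one_sub_I_mul (k : ℝ) : |k| ≤ ‖1 - I * k‖ := by
  simpa using abs_im_le_norm (1 - I * k)

theorem norm_div_one_sub_I_mul_le (z : ℂ) (k : ℝ) : ‖z / (1 - I * k)‖ ≤ ‖z‖ := by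
  rw [norm_div]
  exact div_le_self (norm_nonneg z) (one_le_norm_one_sub_I_mul k)

theorem norm_div_one_sub_I_mul_mul_le (z : ℂ) (k : ℝ) :
    ‖z / (1 - I * k)‖ * (|k| + 1) ≤ 2 * ‖z‖ := by
  have hpos := zero_lt_one.trans_le (one_le_norm_one_sub_I_mul k)
  rw [norm_div, div_mul_eq_mul_div, div_le_iff₀ hpos]
  nlinarith [abs_le_norm_one_sub_I_mul k, one_le_norm_one_sub_I_mul k, norm_nonneg z]

theorem norm_inv_one_sub_I_mul_sub_le (k k' : ℝ) :
    ‖(1 - I * k)⁻¹ - (1 - I * k')⁻¹‖ ≤ |k - k'| := by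
  have hne : ∀ k : ℝ, (1 : ℂ) - I * k ≠ 0 := fun k =>
    norm_pos_iff.1 (zero_lt_one.trans_le (one_le_norm_one_sub_I_mul k))
  have hnum : ‖(1 - I * k') - (1 - I * k)‖ = |k - k'| := by
    rw [sub_sub_sub_cancel_left, ← mul_sub, ← ofReal_sub, norm_mul, norm_I, one_mul, norm_real,
      Real.norm_eq_abs]
  rw [_root_.inv_sub_inv (hne k) (hne k'), norm_div, norm_mul, hnum]
  exact div_le_self (abs_nonneg _)
    (one_le_mul_of_one_le_of_one_le (one_le_norm_one_sub_I_mul k) (one_le_norm_one_sub_I_mul k'))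

theorem norm_div_one_sub_I_mul_sub_le (z z' : ℂ) (k k' : ℝ) :
    ‖z / (1 - I * k) - z' / (1 - I * k')‖ ≤ ‖z - z'‖ + ‖z'‖ * |k - k'| := by
  simp only [div_eq_mul_inv]
  refine (norm_smul_sub_smul_le z z' (1 - I * k)⁻¹ (1 - I * k')⁻¹).trans (add_le_add ?_ ?_)
  · refine mul_le_of_le_one_right (norm_nonneg _) ?_
    simpa using norm_div_one_sub_I_mul_le 1 k
  · exact mul_le_mul_of_nonneg_left (norm_inv_one_sub_I_mul_sub_le k k') (norm_nonneg _)

end Weight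

section Integrand

open Complex

variable {𝒜 : Type*} [CStarAlgebra 𝒜] {L H : 𝒜} {f g : ℝ → ℂ} {Cf Cf' Cg Cg' Ctg a : ℝ}

theorem norm_integrand_sub_integrand_left_le (hL : IsSelfAdjoint L) (hH : IsSelfAdjoint H)
    (hLa : ‖L‖ ≤ a) (hf : ∀ k k', ‖f k - f k'‖ ≤ Cf' * |k - k'|) (hCf : ∀ k, ‖f k‖ ≤ Cf)
    {t : ℝ} (hgt : ‖g t‖ ≤ Cg) (htgt : ‖t • g t‖ ≤ Ctg) (k k' : ℝ) :
    ‖(f k * g t / (1 - I * k)) • propagator L H k t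
        - (f k' * g t / (1 - I * k')) • propagator L H k' t‖
      ≤ (Cf * Ctg * a + (Cf' + Cf) * Cg) * |k - k'| := by
  have hCf0 : 0 ≤ Cf := (norm_nonneg _).trans (hCf 0)
  have hCf'0 : 0 ≤ Cf' := by simpa using (norm_nonneg _).trans (hf 1 0)
  have hCg0 : 0 ≤ Cg := (norm_nonneg _).trans hgt
  have ha : 0 ≤ a := (norm_nonneg _).trans hLa
  have hweight : ‖f k * g t / (1 - I * k) - f k' * g t / (1 - I * k')‖
      ≤ (Cf' + Cf) * Cg * |k - k'| := by
    rw [mul_div_right_comm, mul_div_right_comm (f k'), ← sub_mul, norm_mul]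
    calc _ ≤ (‖f k - f k'‖ + ‖f k'‖ * |k - k'|) * ‖g t‖ := by
          gcongr; exact norm_div_one_sub_I_mul_sub_le _ _ k k'
      _ ≤ (Cf' * |k - k'| + Cf * |k - k'|) * Cg := by gcongr; exacts [hf k k', hCf k']
      _ = (Cf' + Cf) * Cg * |k - k'| := by ring
  have hweight' : ‖f k' * g t / (1 - I * k')‖ ≤ Cf * ‖g t‖ := by
    rw [mul_div_right_comm, norm_mul]
    gcongr
    exact (norm_div_one_sub_I_mul_le _ _).trans (hCf k')
  have htg : |t| * ‖g t‖ ≤ Ctg := by rwa [norm_smul, Real.norm_eq_abs] at htgt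
  refine (norm_smul_sub_smul_le _ _ _ _).trans ?_
  calc _ ≤ (Cf' + Cf) * Cg * |k - k'| * 1 + Cf * ‖g t‖ * (|t| * a * |k - k'|) := by
        gcongr
        · exact norm_propagator_le_one hL hH k t
        · exact (norm_propagator_sub_propagator_left_le hL hH k k' t).trans (by gcongr)
    _ = (Cf * (|t| * ‖g t‖) * a + (Cf' + Cf) * Cg) * |k - k'| := by ring
    _ ≤ (Cf * Ctg * a + (Cf' + Cf) * Cg) * |k - k'| := by gcongr

theorem norm_integrand_sub_integrand_right_le (hL : IsSelfAdjoint L) (hH : IsSelfAdjoint H)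
    (hLa : ‖L‖ ≤ a) (hHa : ‖H‖ ≤ a) (hCf : ∀ k, ‖f k‖ ≤ Cf) {t t' : ℝ}
    (hg : ‖g t - g t'‖ ≤ Cg' * |t - t'|) (hgt' : ‖g t'‖ ≤ Cg) (k : ℝ) :
    ‖(f k * g t / (1 - I * k)) • propagator L H k t
        - (f k * g t' / (1 - I * k)) • propagator L H k t'‖
      ≤ (2 * Cf * Cg * a + Cf * Cg') * |t - t'| := by
  have hCf0 : 0 ≤ Cf := (norm_nonneg _).trans (hCf 0)
  have ha : 0 ≤ a := (norm_nonneg _).trans hLa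
  have hCg0 : 0 ≤ Cg := (norm_nonneg _).trans hgt'
  have hweight : ‖f k * g t / (1 - I * k) - f k * g t' / (1 - I * k)‖ ≤ Cf * (Cg' * |t - t'|) := by
    rw [mul_div_right_comm, mul_div_right_comm (f k), ← mul_sub, norm_mul]
    gcongr
    exact (norm_div_one_sub_I_mul_le _ _).trans (hCf k)
  have hgen : |k| * ‖L‖ + ‖H‖ ≤ (|k| + 1) * a := by nlinarith [abs_nonneg k]
  have hweight' : ‖f k * g t' / (1 - I * k)‖ = ‖f k / (1 - I * k)‖ * ‖g t'‖ := by
    rw [mul_div_right_comm, norm_mul]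
  refine (norm_smul_sub_smul_le _ _ _ _).trans ?_
  rw [hweight']
  calc _ ≤ Cf * (Cg' * |t - t'|) * 1 + ‖f k / (1 - I * k)‖ * Cg * ((|k| + 1) * a * |t - t'|) :=
        add_le_add
          (mul_le_mul hweight (norm_propagator_le_one hL hH k t) (norm_nonneg _)
            ((norm_nonneg _).trans hweight))
          (mul_le_mul (by gcongr)
            ((norm_propagator_sub_propagator_right_le hL hH k t t').trans (by gcongr))
            (norm_nonneg _) (mul_nonneg (norm_nonneg _) hCg0))
    _ = (‖f k / (1 - I * k)‖ * (|k| + 1)) * Cg * a * |t - t'| + Cf * Cg' * |t - t'| := by ring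
    _ ≤ (2 * Cf) * Cg * a * |t - t'| + Cf * Cg' * |t - t'| := by
        gcongr ?_ * Cg * a * |t - t'| + _
        exact (norm_div_one_sub_I_mul_mul_le _ k).trans (by gcongr; exact hCf k)
    _ = (2 * Cf * Cg * a + Cf * Cg') * |t - t'| := by ring

end Integrand

/-- **Quadrature error of the Riemann-sum discretization** (Part 2 of Lemma 6 of the paper).
With `A = L + iH` (`L, H` Hermitian), `U(k,t) = e^{−it(kL+H)}`, `f` continuously
differentiable with `‖f‖_∞ ≤ Cf`, `‖f′‖_∞ ≤ Cf'`, and `g` continuously differentiable on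
`[0,∞)` with `‖g‖_∞ ≤ Cg`, `‖g′‖_∞ ≤ Cg'`, `‖t g(t)‖_∞ ≤ Ctg` on `(0,∞)`, the
left-endpoint Riemann sum on the grid `k_j = −K + j h_k`, `t_l = l h_t` with weights
`c_j = h_k f(k_j)/(1 − i k_j)`, `ch_l = h_t g(t_l)` approximates the truncated double
integral with operator-norm error at most
`2KT h_k (Cf Ctg ‖A‖ + (Cf' + Cf) Cg) + 2KT h_t (2 Cf Cg ‖A‖ + Cf Cg')`. -/
theorem lap_lchs_quadrature_error (N : ℕ) (L H A : Matrix (Fin N) (Fin N) ℂ)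
    (hL : L.IsHermitian) (hH : H.IsHermitian) (hA : A = L + Complex.I • H)
    (U : ℝ → ℝ → Matrix (Fin N) (Fin N) ℂ)
    (hU : ∀ k t : ℝ, U k t =
      NormedSpace.exp ((-(Complex.I * t)) • ((k : ℂ) • L + H)))
    (f : ℝ → ℂ) (hf : ContDiff ℝ 1 f)
    (g : ℝ → ℂ) (hg : ContDiffOn ℝ 1 g (Set.Ici 0))
    (Cf Cf' Cg Cg' Ctg : ℝ)
    (hCf : ∀ k : ℝ, ‖f k‖ ≤ Cf)
    (hCf' : ∀ k : ℝ, ‖deriv f k‖ ≤ Cf')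
    (hCg : ∀ t ∈ Set.Ioi (0 : ℝ), ‖g t‖ ≤ Cg)
    (hCg' : ∀ t ∈ Set.Ioi (0 : ℝ), ‖deriv g t‖ ≤ Cg')
    (hCtg : ∀ t ∈ Set.Ioi (0 : ℝ), ‖t • g t‖ ≤ Ctg)
    (K T : ℝ) (hK : 0 < K) (hT : 0 < T)
    (Mk Mt : ℕ) (hMk : 0 < Mk) (hMt : 0 < Mt)
    (hk ht : ℝ) (hhk : hk = 2 * K / Mk) (hht : ht = T / Mt)
    (kj tl : ℕ → ℝ) (hkj : ∀ j : ℕ, kj j = -K + j * hk) (htl : ∀ l : ℕ, tl l = l * ht)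
    (c ch : ℕ → ℂ)
    (hc : ∀ j : ℕ, c j = hk * f (kj j) / (1 - Complex.I * (kj j)))
    (hch : ∀ l : ℕ, ch l = ht * g (tl l)) :
    ‖(∫ t in Set.Ioc (0 : ℝ) T, ∫ k in Set.Icc (-K) K,
        (f k * g t / (1 - Complex.I * k)) • U k t)
      - ∑ j ∈ Finset.range Mk, ∑ l ∈ Finset.range Mt, (c j * ch l) • U (kj j) (tl l)‖
    ≤ 2 * K * T * hk * (Cf * Ctg * ‖A‖ + (Cf' + Cf) * Cg)
      + 2 * K * T * ht * (2 * Cf * Cg * ‖A‖ + Cf * Cg') := by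
  obtain rfl : U = propagator L H := funext fun k => funext (hU k)
  have hLA : ‖L‖ ≤ ‖A‖ := hA ▸ hL.isSelfAdjoint.norm_le_norm_add_I_smul_left hH.isSelfAdjoint
  have hHA : ‖H‖ ≤ ‖A‖ := hA ▸ hL.isSelfAdjoint.norm_le_norm_add_I_smul_right hH.isSelfAdjoint
  have hfLip : ∀ k k', ‖f k - f k'‖ ≤ Cf' * |k - k'| := fun k k' => by
    simpa only [Real.norm_eq_abs] using Convex.norm_image_sub_le_of_norm_deriv_le
      (fun x _ => (hf.differentiable one_ne_zero).differentiableAt) (fun x _ => hCf' x)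
      convex_univ (mem_univ k') (mem_univ k)
  have hgt : ∀ t ∈ Icc 0 T, ‖g t‖ ≤ Cg := fun t ht =>
    norm_le_of_continuousOn_Ici hg.continuousOn hCg ht.1
  have key := norm_integral_integral_sub_riemannSum_le
    (P := fun k t => (f k * g t / (1 - Complex.I * k)) • propagator L H k t)
    (a := -K) (b := K) (c := 0) (d := T) (hx := hk) (ht := ht) (m := Mk) (n := Mt)
    (by rw [hhk]; positivity) (by rw [hhk]; field_simp; ring) (by rw [hht]; positivity)
    (by rw [hht]; field_simp; ring)
    (fun t htT k _ k' _ => norm_integrand_sub_integrand_left_le hL.isSelfAdjoint hH.isSelfAdjoint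
      hLA hfLip hCf (hgt t htT)
      (norm_le_of_continuousOn_Ici (continuousOn_id.smul hg.continuousOn) hCtg htT.1) k k')
    (fun k _ t htT t' htT' => norm_integrand_sub_integrand_right_le hL.isSelfAdjoint
      hH.isSelfAdjoint hLA hHA hCf (norm_sub_le_of_contDiffOn_Ici hg hCg' htT.1 htT'.1)
      (hgt t' htT') k)
  have hsum : ∑ j ∈ range Mk, ∑ l ∈ range Mt, (c j * ch l) • propagator L H (kj j) (tl l)
      = ∑ j ∈ range Mk, ∑ l ∈ range Mt, (hk * ht) • ((f (-K + j * hk) * g (0 + l * ht)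
          / (1 - Complex.I * ↑(-K + j * hk))) • propagator L H (-K + j * hk) (0 + l * ht)) := by
    refine sum_congr rfl fun j _ => sum_congr rfl fun l _ => ?_
    rw [hc, hch, hkj, htl, zero_add, ← Complex.coe_smul, smul_smul]
    congr 1
    push_cast
    ring
  rw [← intervalIntegral.integral_of_le hT.le, hsum]
  simp_rw [integral_Icc_eq_integral_Ioc, ← intervalIntegral.integral_of_le (neg_le_self hK.le)]
  exact key.trans_eq (by ring)
end

section
/- Let T ≥ 0 and z ∈ ℂ with Re z > 0, and define g(t) = Σ_{n=1}^∞ ((−1)^n / n!) · (T^n t^{n−1} / Γ(n)) for t > 0 (the series converges absolutely). Then t ↦ g(t) e^{−zt} is integrable on (0,∞) and ∫_0^∞ g(t) e^{−zt} dt = e^{−T/z} − 1. -/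
/-!
Integrate the series term by term. With `cₙ = (-1)ⁿ⁺¹ Tⁿ⁺¹ / ((n+1)! n!)` the coefficient of `tⁿ`
in `g`, integration by parts gives `∫₀^∞ tⁿ e^{-zt} dt = n! / zⁿ⁺¹` also for complex `z`, so the
`n`-th term contributes `(-T/z)ⁿ⁺¹ / (n+1)!`, and these sum to `e^{-T/z} - 1`. The interchange of
sum and integral is justified in `L¹`: the same computation with `|T|` and `Re z` shows
`∑ₙ ∫ |cₙ tⁿ e^{-zt}| dt = e^{|T|/Re z} - 1 < ∞`.
-/

open MeasureTheory Set Filter Complex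
open scoped Nat

namespace MeasureTheory

theorem integrable_tsum_of_summable_integral_norm {α E ι : Type*} [MeasurableSpace α]
    {μ : Measure α} [NormedAddCommGroup E] [CompleteSpace E] [Countable ι] {F : ι → α → E}
    (hF_int : ∀ i, Integrable (F i) μ) (hF_sum : Summable fun i ↦ ∫ a, ‖F i a‖ ∂μ) :
    Integrable (fun a ↦ ∑' i, F i a) μ := by
  have h_enorm : ∑' i, ‖(hF_int i).toL1‖ₑ ≠ ⊤ := by
    simp_rw [Integrable.enorm_toL1, ← ofReal_integral_norm_eq_lintegral_enorm (hF_int _),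
      ← ENNReal.ofReal_tsum_of_nonneg (fun i ↦ integral_nonneg fun _ ↦ norm_nonneg _) hF_sum]
    exact ENNReal.ofReal_ne_top
  refine (L1.integrable_coeFn (∑' i, (hF_int i).toL1)).congr ?_
  filter_upwards [Lp.coeFn_tsum h_enorm, ae_all_iff.2 fun i ↦ (hF_int i).coeFn_toL1]
    with a h_sum h_coe
  simp only [h_sum, h_coe]

end MeasureTheory

section LaplaceMonomial

theorem norm_ofReal_pow_mul_cexp_neg_mul (z : ℂ) (n : ℕ) {t : ℝ} (ht : 0 ≤ t) :
    ‖(t : ℂ) ^ n * cexp (-z * t)‖ = t ^ n * Real.exp (-(z.re * t)) := by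
  rw [norm_mul, norm_pow, norm_real, Real.norm_of_nonneg ht, norm_exp]
  simp

theorem hasDerivAt_ofReal_pow_mul_cexp_neg_mul (z : ℂ) (n : ℕ) (t : ℝ) :
    HasDerivAt (fun t : ℝ ↦ (t : ℂ) ^ (n + 1) * cexp (-z * t))
      ((n + 1) * ((t : ℂ) ^ n * cexp (-z * t)) - z * ((t : ℂ) ^ (n + 1) * cexp (-z * t))) t := by
  have h_pow : HasDerivAt (fun t : ℝ ↦ (t : ℂ) ^ (n + 1)) ((n + 1) * (t : ℂ) ^ n) t := by
    simpa using (hasDerivAt_pow (n + 1) (t : ℂ)).comp_ofReal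
  have h_exp : HasDerivAt (fun t : ℝ ↦ cexp (-z * t)) (cexp (-z * t) * -z) t := by
    simpa using ((hasDerivAt_id (t : ℂ)).const_mul (-z)).cexp.comp_ofReal
  exact (h_pow.mul h_exp).congr_deriv (by ring)

variable {z : ℂ}

theorem integrableOn_ofReal_pow_mul_cexp_neg_mul_Ioi (hz : 0 < z.re) (n : ℕ) :
    IntegrableOn (fun t : ℝ ↦ (t : ℂ) ^ n * cexp (-z * t)) (Ioi 0) := by
  have h_real : IntegrableOn (fun t : ℝ ↦ t ^ n * Real.exp (-(z.re * t))) (Ioi 0) := by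
    simpa [Real.rpow_natCast] using
      integrableOn_rpow_mul_exp_neg_mul_rpow (s := n) (p := 1)
        (by linarith [n.cast_nonneg (α := ℝ)]) zero_lt_one hz
  refine h_real.mono' (by fun_prop) ?_
  filter_upwards [ae_restrict_mem measurableSet_Ioi] with t ht
  exact (norm_ofReal_pow_mul_cexp_neg_mul z n ht.le).le

theorem mul_integral_ofReal_pow_succ_mul_cexp_neg_mul_Ioi (hz : 0 < z.re) (n : ℕ) :
    z * ∫ t in Ioi (0 : ℝ), (t : ℂ) ^ (n + 1) * cexp (-z * t)
      = (n + 1) * ∫ t in Ioi (0 : ℝ), (t : ℂ) ^ n * cexp (-z * t) := by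
  have h_int := integrableOn_ofReal_pow_mul_cexp_neg_mul_Ioi hz
  have h_deriv := hasDerivAt_ofReal_pow_mul_cexp_neg_mul z n
  have h_int' := ((h_int n).const_mul (n + 1)).sub ((h_int (n + 1)).const_mul z)
  have h_lim := tendsto_zero_of_hasDerivAt_of_integrableOn_Ioi (fun t _ ↦ h_deriv t) h_int'
    (h_int (n + 1))
  have h_ftc := integral_Ioi_of_hasDerivAt_of_tendsto' (fun t _ ↦ h_deriv t) h_int' h_lim
  rw [integral_sub ((h_int n).const_mul _) ((h_int (n + 1)).const_mul _), integral_const_mul,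
    integral_const_mul] at h_ftc
  simp only [ofReal_zero, zero_pow n.succ_ne_zero, zero_mul, sub_zero] at h_ftc
  linear_combination -h_ftc

theorem integral_ofReal_pow_mul_cexp_neg_mul_Ioi (hz : 0 < z.re) (n : ℕ) :
    ∫ t in Ioi (0 : ℝ), (t : ℂ) ^ n * cexp (-z * t) = n ! / z ^ (n + 1) := by
  have hz0 : z ≠ 0 := fun h ↦ by simp [h] at hz
  induction n with
  | zero => simpa [neg_div, div_neg] using integral_exp_mul_complex_Ioi (a := -z) (by simpa) 0
  | succ n ih =>
    have h := mul_integral_ofReal_pow_succ_mul_cexp_neg_mul_Ioi hz n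
    rw [ih] at h
    rw [← mul_right_inj' hz0, h, Nat.factorial_succ]
    field_simp
    push_cast
    ring

theorem integral_norm_ofReal_pow_mul_cexp_neg_mul_Ioi (hz : 0 < z.re) (n : ℕ) :
    ∫ t in Ioi (0 : ℝ), ‖(t : ℂ) ^ n * cexp (-z * t)‖ = n ! / z.re ^ (n + 1) := by
  rw [setIntegral_congr_fun measurableSet_Ioi
    fun t ht ↦ norm_ofReal_pow_mul_cexp_neg_mul z n (le_of_lt ht)]
  apply ofReal_injective
  rw [← integral_complex_ofReal]
  push_cast
  simpa using integral_ofReal_pow_mul_cexp_neg_mul_Ioi (z := z.re) (by simpa) n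

end LaplaceMonomial

section BesselSeries

noncomputable def besselSeriesCoeff (T : ℝ) (n : ℕ) : ℝ :=
  (-1) ^ (n + 1) * T ^ (n + 1) / ((n + 1)! * n !)

theorem besselSeriesCoeff_mul_pow (T t : ℝ) (n : ℕ) :
    besselSeriesCoeff T n * t ^ n
      = (-1) ^ (n + 1) / (n + 1)! * (T ^ (n + 1) * t ^ n / Real.Gamma (n + 1)) := by
  rw [Real.Gamma_nat_eq_factorial, besselSeriesCoeff]
  ring

theorem abs_besselSeriesCoeff (T : ℝ) (n : ℕ) :
    |besselSeriesCoeff T n| = |T| ^ (n + 1) / ((n + 1)! * n !) := by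
  simp [besselSeriesCoeff, abs_div, abs_mul, abs_pow]

variable {z : ℂ}

theorem integral_besselSeriesCoeff_mul_Ioi (T : ℝ) (hz : 0 < z.re) (n : ℕ) :
    ∫ t in Ioi (0 : ℝ), (besselSeriesCoeff T n : ℂ) * ((t : ℂ) ^ n * cexp (-z * t))
      = (-T / z) ^ (n + 1) / (n + 1)! := by
  rw [integral_const_mul, integral_ofReal_pow_mul_cexp_neg_mul_Ioi hz, besselSeriesCoeff,
    Nat.factorial_succ, div_pow, neg_pow]
  push_cast
  field_simp
  ring

theorem integral_norm_besselSeriesCoeff_mul_Ioi (T : ℝ) (hz : 0 < z.re) (n : ℕ) :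
    ∫ t in Ioi (0 : ℝ), ‖(besselSeriesCoeff T n : ℂ) * ((t : ℂ) ^ n * cexp (-z * t))‖
      = (|T| / z.re) ^ (n + 1) / (n + 1)! := by
  simp only [norm_mul (besselSeriesCoeff T n : ℂ), norm_real, Real.norm_eq_abs,
    abs_besselSeriesCoeff]
  rw [integral_const_mul, integral_norm_ofReal_pow_mul_cexp_neg_mul_Ioi hz, div_pow]
  field_simp

end BesselSeries

theorem Complex.hasSum_pow_succ_div_factorial_succ (x : ℂ) :
    HasSum (fun n : ℕ ↦ x ^ (n + 1) / (n + 1)!) (cexp x - 1) := by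
  have h := NormedSpace.expSeries_div_hasSum_exp x
  rw [← Complex.exp_eq_exp_ℂ] at h
  simpa using (hasSum_nat_add_iff' 1).mpr h

theorem laplace_transform_bessel_series_general (T : ℝ)
    (z : ℂ) (hz : 0 < z.re)
    (g : ℝ → ℝ)
    (hg : ∀ t ∈ Set.Ioi (0 : ℝ), g t = ∑' n : ℕ,
      (-1 : ℝ) ^ (n + 1) / (Nat.factorial (n + 1)) *
        (T ^ (n + 1) * t ^ n / Real.Gamma ((n : ℝ) + 1))) :
    IntegrableOn (fun t : ℝ => (g t : ℂ) * Complex.exp (-z * t)) (Set.Ioi 0) ∧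
    ∫ t in Set.Ioi (0 : ℝ), (g t : ℂ) * Complex.exp (-z * t)
      = Complex.exp (-(T : ℂ) / z) - 1 := by
  set F : ℕ → ℝ → ℂ := fun n t ↦ (besselSeriesCoeff T n : ℂ) * ((t : ℂ) ^ n * cexp (-z * t))
  have hF_int (n : ℕ) : IntegrableOn (F n) (Ioi 0) :=
    (integrableOn_ofReal_pow_mul_cexp_neg_mul_Ioi hz n).const_mul _
  have hF_sum : Summable fun n ↦ ∫ t in Ioi 0, ‖F n t‖ := by
    simp only [F, integral_norm_besselSeriesCoeff_mul_Ioi T hz]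
    exact (Real.summable_pow_div_factorial _).comp_injective (add_left_injective 1)
  have h_eq : EqOn (fun t : ℝ ↦ (g t : ℂ) * cexp (-z * t)) (fun t ↦ ∑' n, F n t) (Ioi 0) := by
    intro t ht
    dsimp only
    rw [hg t ht, ofReal_tsum, ← tsum_mul_right]
    refine tsum_congr fun n ↦ ?_
    rw [← besselSeriesCoeff_mul_pow]
    push_cast
    ring
  refine ⟨IntegrableOn.congr_fun (integrable_tsum_of_summable_integral_norm hF_int hF_sum)
    h_eq.symm measurableSet_Ioi, ?_⟩
  rw [setIntegral_congr_fun measurableSet_Ioi h_eq]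
  refine (hasSum_integral_of_summable_integral_norm hF_int hF_sum).unique ?_
  simpa only [F, integral_besselSeriesCoeff_mul_Ioi T hz] using
    hasSum_pow_succ_div_factorial_succ (-T / z)

/-- **Inverse Laplace transform of `e^{−T/z} − 1`** (Lemma 16 in Appendix C of the paper).
For `T ≥ 0`, `Re z > 0`, and `g(t) = Σ_{n≥1} ((−1)^n / n!) T^n t^{n−1} / Γ(n)`,
the function `t ↦ g(t) e^{−zt}` is integrable on `(0,∞)` and its integral is
`e^{−T/z} − 1`. -/
theorem laplace_transform_bessel_series (T : ℝ) (hT : 0 ≤ T)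
    (z : ℂ) (hz : 0 < z.re)
    (g : ℝ → ℝ)
    (hg : ∀ t ∈ Set.Ioi (0 : ℝ), g t = ∑' n : ℕ,
      (-1 : ℝ) ^ (n + 1) / (Nat.factorial (n + 1)) *
        (T ^ (n + 1) * t ^ n / Real.Gamma ((n : ℝ) + 1))) :
    IntegrableOn (fun t : ℝ => (g t : ℂ) * Complex.exp (-z * t)) (Set.Ioi 0) ∧
    ∫ t in Set.Ioi (0 : ℝ), (g t : ℂ) * Complex.exp (-z * t)
      = Complex.exp (-(T : ℂ) / z) - 1 :=
  laplace_transform_bessel_series_general T z hz g hg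
end

section
/- Let T > 0 and z ∈ ℂ with Re z ≥ 0. Then the function t ↦ (T / (2√(π t³))) e^{−T²/(4t)} e^{−zt} is integrable on (0,∞) and ∫_0^∞ (T / (2√(π t³))) e^{−T²/(4t)} e^{−zt} dt = e^{−T√z}, where √z denotes the principal branch of the square root. -/
/-!
Substituting `t = (T/2)² / v²` turns the integral into `(2/√π) ψ(T/2)` with
`ψ(r) = ∫₀^∞ exp(-v² - z r²/v²) dv`. Differentiating under the integral sign and substituting
`v = r/w` gives `ψ' = -2zχ` and `χ' = -2ψ` on `r > 0`, where `χ(r) = ∫₀^∞ exp(-r²/w² - z w²) dw`.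
Hence, for `c = √z`, the combinations `ψ ± cχ` are multiples of `exp(∓2cr)`, and the Gaussian
integrals `ψ(0) = √π/2 = cχ(0)` give `ψ(r) = (√π/2) exp(-2cr)` when `Re z > 0`. Both sides are
continuous in `z` on the closed half-plane, which covers `Re z = 0`.
-/

open MeasureTheory Set
open scoped Real

section ChangeOfVariables

variable {E : Type*} [NormedAddCommGroup E] [NormedSpace ℝ E]

private lemma jacobian_div_pow (c v : ℝ) (n : ℕ) :
    c * (|-(n : ℝ)| * v ^ (-(n : ℝ) - 1)) = n * c / v ^ (n + 1) := by
  rw [show -(n : ℝ) - 1 = -((n + 1 : ℕ) : ℝ) by push_cast; ring, Real.rpow_neg_natCast,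
    zpow_neg, zpow_natCast, abs_neg, Nat.abs_cast]
  field_simp

private lemma mul_rpow_neg_natCast (c v : ℝ) (n : ℕ) : c * v ^ (-(n : ℝ)) = c / v ^ n := by
  rw [Real.rpow_neg_natCast, zpow_neg, zpow_natCast, div_eq_mul_inv]

theorem integral_comp_div_pow_Ioi (g : ℝ → E) {c : ℝ} (hc : 0 < c) {n : ℕ} (hn : n ≠ 0) :
    ∫ v in Ioi 0, (n * c / v ^ (n + 1)) • g (c / v ^ n) = ∫ x in Ioi 0, g x := by
  have h := integral_comp_rpow_Ioi (fun y => g (c * y)) (neg_ne_zero.mpr (Nat.cast_ne_zero.mpr hn))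
  rw [integral_comp_mul_left_Ioi g 0 hc, mul_zero] at h
  rw [← smul_inv_smul₀ hc.ne' (∫ x in Ioi 0, g x), ← h, ← integral_smul]
  refine setIntegral_congr_fun measurableSet_Ioi fun v _ => ?_
  rw [smul_smul, jacobian_div_pow, mul_rpow_neg_natCast]

theorem integrableOn_comp_div_pow_Ioi_iff (g : ℝ → E) {c : ℝ} (hc : 0 < c) {n : ℕ} (hn : n ≠ 0) :
    IntegrableOn (fun v => (n * c / v ^ (n + 1)) • g (c / v ^ n)) (Ioi 0) ↔
      IntegrableOn g (Ioi 0) := by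
  have h := integrableOn_Ioi_comp_mul_left_iff g 0 hc
  rw [mul_zero] at h
  rw [← h, ← integrableOn_Ioi_comp_rpow_iff (fun y => g (c * y))
    (neg_ne_zero.mpr (Nat.cast_ne_zero.mpr hn))]
  refine (integrableOn_congr_fun (fun v _ => ?_) measurableSet_Ioi).trans
    (integrable_smul_iff hc.ne' _)
  rw [Pi.smul_apply, smul_smul, jacobian_div_pow, mul_rpow_neg_natCast]

end ChangeOfVariables

namespace Complex

lemma ofReal_mul_cpow {x : ℝ} (hx : 0 < x) {w : ℂ} (hw : w ≠ 0) (s : ℂ) :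
    ((x : ℂ) * w) ^ s = (x : ℂ) ^ s * w ^ s := by
  have hx' : (x : ℂ) ≠ 0 := ofReal_ne_zero.mpr hx.ne'
  rw [cpow_def_of_ne_zero (mul_ne_zero hx' hw), log_ofReal_mul hx hw, add_mul, exp_add,
    cpow_def_of_ne_zero hx', cpow_def_of_ne_zero hw, ofReal_log hx.le]

lemma ofReal_div_cpow {x : ℝ} (hx : 0 < x) {z : ℂ} (hz : z ∈ slitPlane) (s : ℂ) :
    ((x : ℂ) / z) ^ s = (x : ℂ) ^ s / z ^ s := by
  rw [div_eq_mul_inv, ofReal_mul_cpow hx (inv_ne_zero (slitPlane_ne_zero hz)),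
    inv_cpow _ _ (slitPlane_arg_ne_pi hz), div_eq_mul_inv]

lemma ofReal_cpow_one_half {x : ℝ} (hx : 0 ≤ x) : (x : ℂ) ^ (1 / 2 : ℂ) = (√x : ℝ) := by
  rw [Real.sqrt_eq_rpow, ofReal_cpow hx]
  norm_num

end Complex

lemma Real.mul_exp_neg_mul_le {β : ℝ} (hβ : 0 < β) (x : ℝ) : x * Real.exp (-(β * x)) ≤ β⁻¹ := by
  have := Real.add_one_le_exp (β * x)
  rw [Real.exp_neg, ← div_eq_mul_inv, div_le_iff₀ (Real.exp_pos _), inv_mul_eq_div,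
    le_div_iff₀ hβ]
  linarith

lemma eq_mul_cexp_of_hasDerivAt {f : ℝ → ℂ} {k : ℂ} (hf : ContinuousOn f (Ici 0))
    (hf' : ∀ r > 0, HasDerivAt f (k * f r) r) {R : ℝ} (hR : 0 ≤ R) :
    f R = f 0 * Complex.exp (k * R) := by
  set g : ℝ → ℂ := fun r => Complex.exp (-k * r) * f r
  have hg' : ∀ r ∈ Ioi (0 : ℝ), HasDerivAt g 0 r := fun r (hr : 0 < r) => by
    have hlin : HasDerivAt (fun r : ℝ => (-k * r : ℂ)) (-k) r := by
      simpa using (hasDerivAt_id r).ofReal_comp.const_mul (-k)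
    refine (hlin.cexp.mul (hf' r hr)).congr_deriv ?_
    ring
  obtain ⟨c, hc⟩ := isOpen_Ioi.exists_is_const_of_deriv_eq_zero isPreconnected_Ioi
    (fun r hr => (hg' r hr).differentiableAt.differentiableWithinAt) (fun r hr => (hg' r hr).deriv)
  have hg : EqOn g (fun _ => c) (Ici 0) :=
    EqOn.of_subset_closure hc (by fun_prop) continuousOn_const Ioi_subset_Ici_self
      (closure_Ioi (0 : ℝ)).symm.subset
  have h₀ := hg (mem_Ici.mpr le_rfl)
  have hR' := hg hR
  simp only [g, Complex.ofReal_zero, mul_zero, Complex.exp_zero, one_mul] at h₀ hR'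
  rw [h₀, ← hR', mul_right_comm, ← Complex.exp_add, neg_mul, neg_add_cancel, Complex.exp_zero,
    one_mul]

namespace LevyLaplace

noncomputable def kernel (a b : ℂ) (r v : ℝ) : ℂ := Complex.exp (-a * v ^ 2 - b * r ^ 2 / v ^ 2)

noncomputable def kernelIntegral (a b : ℂ) (r : ℝ) : ℂ := ∫ v in Ioi 0, kernel a b r v

noncomputable def levyDensity (T t : ℝ) : ℝ := T / (2 * √(π * t ^ 3)) * Real.exp (-T ^ 2 / (4 * t))

variable {a b : ℂ}

lemma norm_kernel (a b : ℂ) (r v : ℝ) :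
    ‖kernel a b r v‖ = Real.exp (-(a.re * v ^ 2) - b.re * (r ^ 2 / v ^ 2)) := by
  rw [kernel, Complex.norm_exp, mul_div_assoc]
  norm_cast
  simp only [Complex.sub_re, neg_mul, Complex.neg_re, Complex.re_mul_ofReal]

lemma norm_kernel_le (hb : 0 ≤ b.re) (r v : ℝ) : ‖kernel a b r v‖ ≤ Real.exp (-(a.re * v ^ 2)) := by
  rw [norm_kernel, Real.exp_le_exp, sub_le_self_iff]
  positivity

lemma measurable_kernel (a b : ℂ) (r : ℝ) : Measurable (kernel a b r) := by
  unfold kernel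
  fun_prop

lemma integrable_exp_neg_re_mul_sq (ha : 0 < a.re) :
    Integrable (fun v : ℝ => Real.exp (-(a.re * v ^ 2))) := by
  simpa only [neg_mul] using integrable_exp_neg_mul_sq ha

lemma integrableOn_kernel (ha : 0 < a.re) (hb : 0 ≤ b.re) (r : ℝ) :
    IntegrableOn (kernel a b r) (Ioi 0) :=
  (integrable_exp_neg_re_mul_sq ha).integrableOn.mono'
    (measurable_kernel a b r).aestronglyMeasurable (.of_forall (norm_kernel_le hb r))

theorem continuousOn_kernelIntegral (ha : 0 < a.re) :
    ContinuousOn (fun p : ℂ × ℝ => kernelIntegral a p.1 p.2) {p | 0 ≤ p.1.re} :=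
  continuousOn_of_dominated (fun _ _ => (measurable_kernel _ _ _).aestronglyMeasurable)
    (fun _ hp => .of_forall (norm_kernel_le hp _))
    (integrable_exp_neg_re_mul_sq ha).integrableOn
    (.of_forall fun v => Continuous.continuousOn (by unfold kernel; fun_prop))

theorem continuous_kernelIntegral (ha : 0 < a.re) (hb : 0 ≤ b.re) :
    Continuous (kernelIntegral a b) :=
  (continuousOn_kernelIntegral ha).comp_continuous (continuous_const.prodMk continuous_id)
    fun _ => hb

theorem kernelIntegral_zero (ha : 0 < a.re) (b : ℂ) :
    kernelIntegral a b 0 = (π / a) ^ (1 / 2 : ℂ) / 2 := by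
  simpa [kernelIntegral, kernel] using integral_gaussian_complex_Ioi ha

lemma hasDerivAt_kernel (a b : ℂ) (r v : ℝ) :
    HasDerivAt (fun r => kernel a b r v) (-2 * b * r / v ^ 2 * kernel a b r v) r := by
  have hsq : HasDerivAt (fun r : ℝ => (r : ℂ) ^ 2) (2 * r) r := by
    simpa using (hasDerivAt_pow 2 r).ofReal_comp
  refine (((hsq.const_mul b).div_const ((v : ℂ) ^ 2)).const_sub (-a * (v : ℂ) ^ 2)).cexp
    |>.congr_deriv ?_
  rw [kernel]
  ring

lemma norm_deriv_kernel_le (hb : 0 < b.re) {r₀ r : ℝ} (hr : r ∈ Metric.ball r₀ (r₀ / 2)) (v : ℝ) :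
    ‖-2 * b * r / v ^ 2 * kernel a b r v‖ ≤
      3 * r₀ * ‖b‖ / (b.re * (r₀ / 2) ^ 2) * Real.exp (-(a.re * v ^ 2)) := by
  rw [Metric.mem_ball, Real.dist_eq, abs_lt] at hr
  have hr₀ : 0 < r₀ := by linarith
  have hr_pos : 0 < r := by linarith
  have hnorm : ‖-2 * b * r / v ^ 2 * kernel a b r v‖ =
      2 * ‖b‖ * r * ((v ^ 2)⁻¹ * Real.exp (-(b.re * r ^ 2 * (v ^ 2)⁻¹))) *
        Real.exp (-(a.re * v ^ 2)) := by
    rw [norm_mul, norm_kernel, sub_eq_add_neg, Real.exp_add]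
    simp only [neg_mul, Complex.norm_div, norm_neg, Complex.norm_mul, Complex.norm_ofNat,
      Complex.norm_real, Real.norm_eq_abs, abs_of_pos hr_pos, norm_pow, sq_abs]
    ring_nf
  rw [hnorm]
  -- `r` stays away from `0`, so `exp (-b.re * r² / v²)` absorbs the singular factor `1 / v²`
  calc 2 * ‖b‖ * r * ((v ^ 2)⁻¹ * Real.exp (-(b.re * r ^ 2 * (v ^ 2)⁻¹))) *
        Real.exp (-(a.re * v ^ 2))
      ≤ 2 * ‖b‖ * (3 * r₀ / 2) * ((v ^ 2)⁻¹ * Real.exp (-(b.re * (r₀ / 2) ^ 2 * (v ^ 2)⁻¹))) *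
        Real.exp (-(a.re * v ^ 2)) := by
        gcongr <;> linarith
    _ ≤ 2 * ‖b‖ * (3 * r₀ / 2) * (b.re * (r₀ / 2) ^ 2)⁻¹ * Real.exp (-(a.re * v ^ 2)) := by
        gcongr
        exact Real.mul_exp_neg_mul_le (by positivity) _
    _ = 3 * r₀ * ‖b‖ / (b.re * (r₀ / 2) ^ 2) * Real.exp (-(a.re * v ^ 2)) := by ring

lemma kernel_div {r w : ℝ} (hr : r ≠ 0) (hw : w ≠ 0) : kernel a b r (r / w) = kernel b a r w := by
  have hr' : (r : ℂ) ≠ 0 := Complex.ofReal_ne_zero.mpr hr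
  have hw' : (w : ℂ) ≠ 0 := Complex.ofReal_ne_zero.mpr hw
  simp only [kernel]
  congr 1
  push_cast
  field_simp
  ring

theorem integral_deriv_kernel (a b : ℂ) {r : ℝ} (hr : 0 < r) :
    ∫ v in Ioi 0, -2 * b * r / v ^ 2 * kernel a b r v = -2 * b * kernelIntegral b a r := by
  rw [← integral_comp_div_pow_Ioi _ hr one_ne_zero, kernelIntegral, ← integral_const_mul]
  refine setIntegral_congr_fun measurableSet_Ioi fun w (hw : 0 < w) => ?_
  simp only [pow_one, Nat.cast_one, one_mul, Complex.real_smul]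
  rw [kernel_div hr.ne' hw.ne']
  have hr' : (r : ℂ) ≠ 0 := Complex.ofReal_ne_zero.mpr hr.ne'
  have hw' : (w : ℂ) ≠ 0 := Complex.ofReal_ne_zero.mpr hw.ne'
  push_cast
  field_simp

theorem hasDerivAt_kernelIntegral (ha : 0 < a.re) (hb : 0 < b.re) {r : ℝ} (hr : 0 < r) :
    HasDerivAt (kernelIntegral a b) (-2 * b * kernelIntegral b a r) r := by
  rw [← integral_deriv_kernel a b hr]
  refine (hasDerivAt_integral_of_dominated_loc_of_deriv_le (F := fun r v => kernel a b r v)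
    (Metric.ball_mem_nhds r (half_pos hr))
    (.of_forall fun _ => (measurable_kernel a b _).aestronglyMeasurable)
    (integrableOn_kernel ha hb.le r) ?_ (.of_forall fun v r' hr' => norm_deriv_kernel_le hb hr' v)
    ((integrable_exp_neg_re_mul_sq ha).integrableOn.const_mul _)
    (.of_forall fun v r' _ => hasDerivAt_kernel a b r' v)).2
  exact (by unfold kernel; fun_prop : Measurable _).aestronglyMeasurable

theorem kernelIntegral_one_of_re_pos {z : ℂ} (hz : 0 < z.re) {R : ℝ} (hR : 0 ≤ R) :
    kernelIntegral 1 z R = (√π : ℝ) / 2 * Complex.exp (-2 * z ^ (1 / 2 : ℂ) * R) := by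
  have h1 : 0 < (1 : ℂ).re := by simp
  set c := z ^ (1 / 2 : ℂ)
  have hcz : c ^ 2 = z := by simp [c]
  have hc : c ≠ 0 := by rintro hc; simp [hc, ← hcz] at hz
  set ψ := kernelIntegral 1 z with hψ_def
  set χ := kernelIntegral z 1 with hχ_def
  have hψ' (r : ℝ) (hr : 0 < r) : HasDerivAt ψ (-2 * z * χ r) r :=
    hasDerivAt_kernelIntegral h1 hz hr
  have hχ' (r : ℝ) (hr : 0 < r) : HasDerivAt χ (-2 * 1 * ψ r) r :=
    hasDerivAt_kernelIntegral hz h1 hr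
  have hψ : Continuous ψ := continuous_kernelIntegral h1 hz.le
  have hχ : Continuous χ := continuous_kernelIntegral hz zero_le_one
  have hψ₀ : ψ 0 = (√π : ℝ) / 2 := by
    rw [hψ_def, kernelIntegral_zero h1, div_one, Complex.ofReal_cpow_one_half Real.pi_pos.le]
  have hχ₀ : c * χ 0 = (√π : ℝ) / 2 := by
    rw [hχ_def, kernelIntegral_zero hz, Complex.ofReal_div_cpow Real.pi_pos (Or.inl hz),
      Complex.ofReal_cpow_one_half Real.pi_pos.le]
    field_simp
    exact div_self hc
  have hsum := eq_mul_cexp_of_hasDerivAt (f := fun r => ψ r + c * χ r) (k := -2 * c)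
    (hψ.add (continuous_const.mul hχ)).continuousOn
    (fun r hr => ((hψ' r hr).add ((hχ' r hr).const_mul c)).congr_deriv
      (by linear_combination (2 * χ r) * hcz)) hR
  have hdiff := eq_mul_cexp_of_hasDerivAt (f := fun r => ψ r - c * χ r) (k := 2 * c)
    (hψ.sub (continuous_const.mul hχ)).continuousOn
    (fun r hr => ((hψ' r hr).sub ((hχ' r hr).const_mul c)).congr_deriv
      (by linear_combination (2 * χ r) * hcz)) hR
  simp only [hψ₀, hχ₀, sub_self, zero_mul] at hsum hdiff
  linear_combination (hsum + hdiff) / 2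

theorem kernelIntegral_one {z : ℂ} (hz : 0 ≤ z.re) {R : ℝ} (hR : 0 ≤ R) :
    kernelIntegral 1 z R = (√π : ℝ) / 2 * Complex.exp (-2 * z ^ (1 / 2 : ℂ) * R) := by
  have hlhs : ContinuousOn (fun z => kernelIntegral 1 z R) {z : ℂ | 0 ≤ z.re} :=
    (continuousOn_kernelIntegral (by simp)).comp (f := fun z : ℂ => (z, R)) (by fun_prop)
      fun _ hz => hz
  have hrhs : ContinuousOn (fun z : ℂ => (√π : ℝ) / 2 * Complex.exp (-2 * z ^ (1 / 2 : ℂ) * R))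
      {z : ℂ | 0 ≤ z.re} := fun z hz => by
    have := Complex.continuousAt_cpow_const_of_re_pos (w := 1 / 2) (Or.inl hz) (by norm_num)
    exact ContinuousAt.continuousWithinAt (by fun_prop)
  exact EqOn.of_subset_closure (fun z hz => kernelIntegral_one_of_re_pos hz hR) hlhs hrhs
    (fun _ hz => le_of_lt (α := ℝ) hz) (Complex.closure_setOfPred_lt_re 0).symm.subset hz

lemma mul_levyDensity_div_sq {T v : ℝ} (hT : 0 < T) (hv : 0 < v) :
    2 * (T / 2) ^ 2 / v ^ 3 * levyDensity T ((T / 2) ^ 2 / v ^ 2) =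
      2 / √π * Real.exp (-v ^ 2) := by
  have hsqrt : √(π * ((T / 2) ^ 2 / v ^ 2) ^ 3) = √π * (T / 2) ^ 3 / v ^ 3 := by
    rw [Real.sqrt_eq_iff_mul_self_eq_of_pos (by positivity),
      show √π * (T / 2) ^ 3 / v ^ 3 * (√π * (T / 2) ^ 3 / v ^ 3) =
        √π * √π * ((T / 2) ^ 3 / v ^ 3) ^ 2 by ring, Real.mul_self_sqrt Real.pi_pos.le]
    field_simp
  have hexp : -T ^ 2 / (4 * ((T / 2) ^ 2 / v ^ 2)) = -v ^ 2 := by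
    field_simp
    ring
  rw [levyDensity, hsqrt, hexp]
  have := Real.sqrt_pos.mpr Real.pi_pos
  field_simp

lemma smul_levyDensity_mul_cexp_div_sq {T v : ℝ} (hT : 0 < T) (hv : 0 < v) (z : ℂ) :
    (2 * (T / 2) ^ 2 / v ^ 3) •
        ((levyDensity T ((T / 2) ^ 2 / v ^ 2) : ℂ) *
          Complex.exp (-z * ((T / 2) ^ 2 / v ^ 2 : ℝ))) =
      ((2 / √π : ℝ) : ℂ) * kernel 1 z (T / 2) v := by
  rw [Complex.real_smul, ← mul_assoc, ← Complex.ofReal_mul, mul_levyDensity_div_sq hT hv, kernel,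
    Complex.ofReal_mul, mul_assoc, Complex.ofReal_exp, ← Complex.exp_add]
  congr 2
  push_cast
  ring

end LevyLaplace

open LevyLaplace in
/-- **Inverse Laplace transform of `e^{−T√z}`** (Section 4.4 of the paper). For `T > 0`
and `Re z ≥ 0`, the function `t ↦ (T/(2√(π t³))) e^{−T²/(4t)} e^{−zt}` is integrable on
`(0,∞)` and `∫_0^∞ (T/(2√(π t³))) e^{−T²/(4t)} e^{−zt} dt = e^{−T√z}`, with the principal
branch of the square root. -/
theorem laplace_transform_levy (T : ℝ) (hT : 0 < T) (z : ℂ) (hz : 0 ≤ z.re) :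
    IntegrableOn
      (fun t : ℝ =>
        ((T / (2 * Real.sqrt (Real.pi * t ^ 3)) * Real.exp (-T ^ 2 / (4 * t)) : ℝ) : ℂ) *
          Complex.exp (-z * t))
      (Set.Ioi 0) ∧
    ∫ t in Set.Ioi (0 : ℝ),
        ((T / (2 * Real.sqrt (Real.pi * t ^ 3)) * Real.exp (-T ^ 2 / (4 * t)) : ℝ) : ℂ) *
          Complex.exp (-z * t)
      = Complex.exp (-(T : ℂ) * z ^ (1 / 2 : ℂ)) := by
  change IntegrableOn (fun t : ℝ => (levyDensity T t : ℂ) * Complex.exp (-z * t)) (Ioi 0) ∧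
    ∫ t in Ioi 0, (levyDensity T t : ℂ) * Complex.exp (-z * t) = _
  have hc : 0 < (T / 2) ^ 2 := by positivity
  have hsubst : ∀ v ∈ Ioi (0 : ℝ), ((2 : ℕ) * (T / 2) ^ 2 / v ^ (2 + 1)) •
      ((levyDensity T ((T / 2) ^ 2 / v ^ 2) : ℂ) * Complex.exp (-z * ((T / 2) ^ 2 / v ^ 2 : ℝ)))
        = ((2 / √π : ℝ) : ℂ) * kernel 1 z (T / 2) v := fun v hv => by
    exact_mod_cast smul_levyDensity_mul_cexp_div_sq hT hv z
  refine ⟨(integrableOn_comp_div_pow_Ioi_iff _ hc two_ne_zero).mp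
    (IntegrableOn.congr_fun ((integrableOn_kernel (by simp) hz (T / 2)).const_mul _)
      (fun v hv => (hsubst v hv).symm) measurableSet_Ioi), ?_⟩
  rw [← integral_comp_div_pow_Ioi _ hc two_ne_zero, setIntegral_congr_fun measurableSet_Ioi hsubst,
    integral_const_mul, ← kernelIntegral, kernelIntegral_one hz (half_pos hT).le]
  have : (√π : ℂ) ≠ 0 := by exact_mod_cast (Real.sqrt_pos.mpr Real.pi_pos).ne'
  push_cast
  field_simp
end
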